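/- Conversely, if f satisfies f_u(ab) = f_u(a)b + a f_u(b) - a f_u(Id) b for all a, b ∈ G and all u, then for any two solutions χ_t, χ̄_t of dχ/dt = f_{u_t}(χ), the left-invariant error η_t^L = χ_t^{-1} χ̄_t satisfies dη_t^L/dt = f_{u_t}(η_t^L) - f_{u_t}(Id)·η_t^L, and the right-invariant error η_t^R = χ̄_t χ_t^{-1} satisfies dη_t^R/dt = f_{u_t}(η_t^R) - η_t^R·f_{u_t}(Id). -/

import Mathlib

attribute [local instance] Matrix.normedAddCommGroup Matrix.normedSpace

/-- The matrix value of an invertible matrix. -/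
def uval {N : ℕ} (a : (Matrix (Fin N) (Fin N) ℝ)ˣ) : Matrix (Fin N) (Fin N) ℝ := a

/-!
Differentiating `η = χ⁻¹ χ̄` with the product rule and `(χ⁻¹)' = -χ⁻¹ χ' χ⁻¹` gives
`η' = -χ⁻¹ f(χ) η + χ⁻¹ f(χ̄)`. Writing `χ̄ = χ η` and expanding `f(χ η)` by the group-affine
identity turns this into `f(η) - f(Id) η`. The right-invariant error is symmetric, via `χ̄ = η χ`.
-/

open Filter Topology

def IsGroupAffine {R : Type*} [Ring R] (F : R → R) : Prop :=
  ∀ a b : Rˣ, F (a * b) = F a * b + a * F b - a * F 1 * b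

namespace IsGroupAffine

variable {R : Type*} [Ring R] {F : R → R}

theorem map_inv_mul (hF : IsGroupAffine F) (a b : Rˣ) :
    F ↑(a⁻¹ * b) = ↑a⁻¹ * F b - ↑a⁻¹ * F a * ↑(a⁻¹ * b) + F 1 * ↑(a⁻¹ * b) := by
  have h := hF a (a⁻¹ * b)
  rw [← Units.val_mul, mul_inv_cancel_left] at h
  simp only [h, mul_add, mul_sub, ← mul_assoc, Units.inv_mul, one_mul]
  abel

theorem map_mul_inv (hF : IsGroupAffine F) (a b : Rˣ) :
    F ↑(b * a⁻¹) = F b * ↑a⁻¹ - ↑(b * a⁻¹) * F a * ↑a⁻¹ + ↑(b * a⁻¹) * F 1 := by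
  have h := hF (b * a⁻¹) a
  rw [← Units.val_mul, inv_mul_cancel_right] at h
  simp only [h, add_mul, sub_mul, mul_assoc, Units.mul_inv, mul_one]
  abel

end IsGroupAffine

section MatrixCalculus

variable {𝕜 : Type*} [NontriviallyNormedField 𝕜] {l m n : Type*}

theorem Filter.Tendsto.matrix_mul [Fintype m] {α : Type*} {F : Filter α} {A : α → Matrix l m 𝕜}
    {B : α → Matrix m n 𝕜} {A₀ : Matrix l m 𝕜} {B₀ : Matrix m n 𝕜}
    (hA : Tendsto A F (𝓝 A₀)) (hB : Tendsto B F (𝓝 B₀)) :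
    Tendsto (fun x => A x * B x) F (𝓝 (A₀ * B₀)) :=
  ((continuous_fst.matrix_mul continuous_snd).tendsto (A₀, B₀)).comp
    (g := fun p : Matrix l m 𝕜 × Matrix m n 𝕜 => p.1 * p.2) (f := fun x => (A x, B x))
    (hA.prodMk_nhds hB)

theorem HasDerivAt.matrix_mul [Fintype l] [Fintype m] [Fintype n] {A : 𝕜 → Matrix l m 𝕜}
    {B : 𝕜 → Matrix m n 𝕜} {A' : Matrix l m 𝕜} {B' : Matrix m n 𝕜} {t : 𝕜}
    (hA : HasDerivAt A A' t) (hB : HasDerivAt B B' t) :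
    HasDerivAt (fun s => A s * B s) (A' * B t + A t * B') t := by
  have hslope : slope (fun s => A s * B s) t = fun s => slope A t s * B s + A t * slope B t s := by
    ext1 s
    simp only [slope_def_module, Matrix.mul_smul, Matrix.smul_mul, ← smul_add, Matrix.sub_mul,
      Matrix.mul_sub, sub_add_sub_cancel]
  have hBt : Tendsto B (𝓝[≠] t) (𝓝 (B t)) := hB.continuousAt.tendsto.mono_left nhdsWithin_le_nhds
  refine hasDerivAt_iff_tendsto_slope.2 ?_
  rw [hslope]
  exact ((hasDerivAt_iff_tendsto_slope.1 hA).matrix_mul hBt).add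
    (tendsto_const_nhds.matrix_mul (hasDerivAt_iff_tendsto_slope.1 hB))

theorem HasDerivAt.matrix_units_inv [Fintype n] [DecidableEq n] {χ : 𝕜 → (Matrix n n 𝕜)ˣ}
    {D : Matrix n n 𝕜} {t : 𝕜} (h : HasDerivAt (fun s => (χ s : Matrix n n 𝕜)) D t) :
    HasDerivAt (fun s => ((χ s)⁻¹ : (Matrix n n 𝕜)ˣ) : 𝕜 → Matrix n n 𝕜)
      (-(((χ t)⁻¹ : (Matrix n n 𝕜)ˣ) * D * ((χ t)⁻¹ : (Matrix n n 𝕜)ˣ))) t := by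
  have hcont : ContinuousAt (fun s => ((χ s)⁻¹ : (Matrix n n 𝕜)ˣ) : 𝕜 → Matrix n n 𝕜) t := by
    simp only [Matrix.coe_units_inv]
    refine ContinuousAt.comp (g := Inv.inv) (continuousAt_matrix_inv _ ?_) h.continuousAt
    rw [Ring.inverse_eq_inv']
    exact continuousAt_inv₀ ((χ t).isUnit.map Matrix.detMonoidHom).ne_zero
  have hslope : slope (fun s => ((χ s)⁻¹ : (Matrix n n 𝕜)ˣ) : 𝕜 → Matrix n n 𝕜) t = fun s =>
      -(((χ s)⁻¹ : (Matrix n n 𝕜)ˣ) * slope (fun s => (χ s : Matrix n n 𝕜)) t s *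
        ((χ t)⁻¹ : (Matrix n n 𝕜)ˣ)) := by
    ext1 s
    simp only [slope_def_module, Matrix.mul_smul, Matrix.smul_mul, ← smul_neg, mul_sub, sub_mul,
      Units.inv_mul, one_mul, mul_assoc, Units.mul_inv, mul_one, neg_sub]
  refine hasDerivAt_iff_tendsto_slope.2 ?_
  rw [hslope]
  exact (((hcont.tendsto.mono_left nhdsWithin_le_nhds).mul
    (hasDerivAt_iff_tendsto_slope.1 h)).mul_const _).neg

end MatrixCalculus

section ErrorDynamics

variable {𝕜 : Type*} [NontriviallyNormedField 𝕜] {n : Type*} [Fintype n] [DecidableEq n]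
  {F : Matrix n n 𝕜 → Matrix n n 𝕜} {χ χb : 𝕜 → (Matrix n n 𝕜)ˣ} {t : 𝕜}

theorem IsGroupAffine.hasDerivAt_inv_mul (hF : IsGroupAffine F)
    (hχ : HasDerivAt (fun s => (χ s : Matrix n n 𝕜)) (F (χ t)) t)
    (hχb : HasDerivAt (fun s => (χb s : Matrix n n 𝕜)) (F (χb t)) t) :
    HasDerivAt (fun s => ((χ s)⁻¹ * χb s : (Matrix n n 𝕜)ˣ) : 𝕜 → Matrix n n 𝕜)
      (F ↑((χ t)⁻¹ * χb t) - F 1 * (↑((χ t)⁻¹ * χb t) : Matrix n n 𝕜)) t := by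
  refine (hχ.matrix_units_inv.matrix_mul hχb).congr_deriv ?_
  rw [hF.map_inv_mul, Units.val_mul]
  noncomm_ring

theorem IsGroupAffine.hasDerivAt_mul_inv (hF : IsGroupAffine F)
    (hχ : HasDerivAt (fun s => (χ s : Matrix n n 𝕜)) (F (χ t)) t)
    (hχb : HasDerivAt (fun s => (χb s : Matrix n n 𝕜)) (F (χb t)) t) :
    HasDerivAt (fun s => (χb s * (χ s)⁻¹ : (Matrix n n 𝕜)ˣ) : 𝕜 → Matrix n n 𝕜)
      (F ↑(χb t * (χ t)⁻¹) - (↑(χb t * (χ t)⁻¹) : Matrix n n 𝕜) * F 1) t := by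
  refine (hχb.matrix_mul hχ.matrix_units_inv).congr_deriv ?_
  rw [hF.map_mul_inv, Units.val_mul]
  noncomm_ring

end ErrorDynamics

/-- If `f_{u_t}` (here `f t` for the time-varying input signal `u_t`) is group-affine,
then for any two solutions `χ, χ̄` of `dχ/dt = f_{u_t}(χ)`, the left-invariant error
`η^L = χ⁻¹ χ̄` satisfies `dη^L/dt = f_{u_t}(η^L) - f_{u_t}(Id) η^L` and the
right-invariant error `η^R = χ̄ χ⁻¹` satisfies `dη^R/dt = f_{u_t}(η^R) - η^R f_{u_t}(Id)`. -/
theorem stmt3 {N : ℕ}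
    (f : ℝ → Matrix (Fin N) (Fin N) ℝ → Matrix (Fin N) (Fin N) ℝ)
    (hf : ∀ (t : ℝ) (a b : (Matrix (Fin N) (Fin N) ℝ)ˣ),
      f t (uval a * uval b)
        = f t (uval a) * uval b + uval a * f t (uval b) - uval a * f t 1 * uval b)
    (χ χb : ℝ → (Matrix (Fin N) (Fin N) ℝ)ˣ)
    (hχ : ∀ t, HasDerivAt (fun s => uval (χ s)) (f t (uval (χ t))) t)
    (hχb : ∀ t, HasDerivAt (fun s => uval (χb s)) (f t (uval (χb t))) t) :
    (∀ t, HasDerivAt (fun s => uval ((χ s)⁻¹ * χb s))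
      (f t (uval ((χ t)⁻¹ * χb t)) - f t 1 * uval ((χ t)⁻¹ * χb t)) t) ∧
    (∀ t, HasDerivAt (fun s => uval (χb s * (χ s)⁻¹))
      (f t (uval (χb t * (χ t)⁻¹)) - uval (χb t * (χ t)⁻¹) * f t 1) t) :=
  ⟨fun t => IsGroupAffine.hasDerivAt_inv_mul (hf t) (hχ t) (hχb t),
    fun t => IsGroupAffine.hasDerivAt_mul_inv (hf t) (hχ t) (hχb t)⟩
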